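/- arXiv:1610.03776 — 2 statements merged into one kernel-verified Lean document; each statement's English description precedes it below -/
import Mathlib

section
/- Let Z_1,…,Z_N be square-integrable negatively associated real-valued random variables with E[Z_i] = 0 and |Z_i| ≤ c almost surely (c > 0) for 1 ≤ i ≤ N, and let a_1,…,a_N be constants with 0 ≤ a_i ≤ 1. Set σ² = (1/N) Σ_{i=1}^N a_i² Var(Z_i). Then for all t > 0 and all N ≥ 1, P{ Σ_{i=1}^N a_i Z_i ≥ t } ≤ exp( −t² / ( 2Nσ² + (2/3)ct ) ). -/
open MeasureTheory ProbabilityTheory Real Finset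

/-- `H(x) = (1+x)log(1+x) - x`. -/
noncomputable def entH (x : ℝ) : ℝ := (1 + x) * Real.log (1 + x) - x
/-- Negative association of a finite family of real random variables: for all disjoint
index sets and all bounded measurable coordinatewise-nondecreasing functions, the
covariance is nonpositive. -/
def NegAssoc {Ω : Type*} [MeasurableSpace Ω] (μ : Measure Ω) {N : ℕ}
    (Z : Fin N → Ω → ℝ) : Prop :=
  ∀ A₁ A₂ : Finset (Fin N), Disjoint A₁ A₂ →
    ∀ f : ({i // i ∈ A₁} → ℝ) → ℝ, ∀ g : ({i // i ∈ A₂} → ℝ) → ℝ,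
      Measurable f → Measurable g →
      (∃ C, ∀ y, |f y| ≤ C) → (∃ C, ∀ y, |g y| ≤ C) →
      Monotone f → Monotone g →
      ∫ ω, f (fun i => Z i.1 ω) * g (fun j => Z j.1 ω) ∂μ ≤
        (∫ ω, f (fun i => Z i.1 ω) ∂μ) * ∫ ω, g (fun j => Z j.1 ω) ∂μ

/-! Chernoff's method. The truncated exponentials `x ↦ exp (λ aᵢ min x c)` are bounded and
nondecreasing, so negative association applied inductively to them bounds the moment generating
function of `∑ aᵢ Zᵢ` by the product of those of the summands. Comparing the series of
`ψ(x) = eˣ - 1 - x` termwise gives `c² ψ(λ aᵢ Zᵢ) ≤ (aᵢ Zᵢ)² ψ(λ c)` for `|aᵢ Zᵢ| ≤ c`, hence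
`E exp (λ aᵢ Zᵢ) ≤ exp (aᵢ² Var Zᵢ ψ(λ c) / c²)`, and a geometric bound gives
`ψ(u) ≤ u² / (2 (1 - u / 3))`. The choice `λ = t / (N σ² + c t / 3)` then yields the exponent. -/

open Nat in
lemma Real.hasSum_exp_sub_one_sub (x : ℝ) :
    HasSum (fun n : ℕ => x ^ (n + 2) / (n + 2)!) (exp x - 1 - x) := by
  have h := NormedSpace.expSeries_div_hasSum_exp x
  rw [← Real.exp_eq_exp_ℝ, ← hasSum_nat_add_iff' 2] at h
  simpa [Finset.sum_range_succ, sub_sub] using h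

lemma sq_mul_exp_sub_one_sub_le {x u : ℝ} (hx : |x| ≤ u) :
    u ^ 2 * (exp x - 1 - x) ≤ x ^ 2 * (exp u - 1 - u) := by
  refine hasSum_le (fun n => ?_) ((Real.hasSum_exp_sub_one_sub x).mul_left _)
    ((Real.hasSum_exp_sub_one_sub u).mul_left _)
  have hpow : x ^ n ≤ u ^ n :=
    (le_abs_self _).trans ((abs_pow x n).trans_le (pow_le_pow_left₀ (abs_nonneg x) hx n))
  rw [mul_div_assoc', mul_div_assoc']
  refine div_le_div_of_nonneg_right ?_ (by positivity)
  calc u ^ 2 * x ^ (n + 2) = x ^ 2 * (u ^ 2 * x ^ n) := by ring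
    _ ≤ x ^ 2 * (u ^ 2 * u ^ n) := by gcongr
    _ = x ^ 2 * u ^ (n + 2) := by ring

open Nat in
lemma three_sub_mul_exp_sub_one_sub_le {u : ℝ} (hu : 0 ≤ u) :
    (3 - u) * (exp u - 1 - u) ≤ 3 / 2 * u ^ 2 := by
  rcases lt_or_ge u 3 with hu3 | hu3
  · -- the tail of the exponential series is dominated by a geometric series of ratio `u / 3`
    have hterm : ∀ n : ℕ, u ^ (n + 2) / (n + 2)! ≤ u ^ 2 / 2 * (u / 3) ^ n := fun n => by
      have hfact : (2 * 3 ^ n : ℝ) ≤ (n + 2)! := by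
        exact_mod_cast (add_comm 2 n ▸ Nat.factorial_mul_pow_le_factorial : 2! * 3 ^ n ≤ (n + 2)!)
      calc u ^ (n + 2) / (n + 2)! ≤ u ^ (n + 2) / (2 * 3 ^ n) := by gcongr
        _ = u ^ 2 / 2 * (u / 3) ^ n := by rw [div_pow]; field_simp; ring
    have hle : exp u - 1 - u ≤ u ^ 2 / 2 * (1 - u / 3)⁻¹ :=
      hasSum_le hterm (Real.hasSum_exp_sub_one_sub u)
        ((hasSum_geometric_of_lt_one (by positivity) (by linarith)).mul_left _)
    have h3 : 0 < 3 - u := by linarith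
    calc (3 - u) * (exp u - 1 - u) ≤ (3 - u) * (u ^ 2 / 2 * (1 - u / 3)⁻¹) := by gcongr
      _ = 3 / 2 * u ^ 2 := by field_simp
  · have hψ : 0 ≤ exp u - 1 - u := by linarith [add_one_le_exp u]
    nlinarith

lemma exp_mul_le_one_add_add_sq {l c y : ℝ} (hl : 0 ≤ l) (hc : 0 < c) (hy : |y| ≤ c) :
    exp (l * y) ≤ 1 + l * y + (exp (l * c) - 1 - l * c) / c ^ 2 * y ^ 2 := by
  rcases hl.eq_or_lt with rfl | hl
  · simp
  have h := sq_mul_exp_sub_one_sub_le (x := l * y) (u := l * c)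
    (by rw [abs_mul, abs_of_pos hl]; gcongr)
  have h' : c ^ 2 * (exp (l * y) - 1 - l * y) ≤ y ^ 2 * (exp (l * c) - 1 - l * c) := by
    rw [mul_pow, mul_pow, mul_assoc, mul_assoc] at h
    exact le_of_mul_le_mul_left h (by positivity)
  rw [div_mul_eq_mul_div, ← sub_le_iff_le_add', le_div_iff₀ (by positivity)]
  linarith

lemma neg_mul_add_mul_exp_sub_one_sub_le {v c t l : ℝ} (hv : 0 ≤ v) (hc : 0 < c) (ht : 0 < t)
    (hl : l = t / (v + c * t / 3)) :
    -(l * t) + v * ((exp (l * c) - 1 - l * c) / c ^ 2) ≤ -t ^ 2 / (2 * v + 2 / 3 * c * t) := by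
  set D := v + c * t / 3
  have hD : 0 < D := by positivity
  have hlD : l * D = t := by rw [hl, div_mul_cancel₀ _ hD.ne']
  have h := three_sub_mul_exp_sub_one_sub_le (u := l * c) (by rw [hl]; positivity)
  set ψ := exp (l * c) - 1 - l * c
  have key : v * ψ * D ≤ t ^ 2 * c ^ 2 / 2 := by
    have e1 : (3 - l * c) * D ^ 2 = 3 * v * D := by
      linear_combination (-(c * D)) * hlD
    have e2 : (l * c) ^ 2 * D ^ 2 = t ^ 2 * c ^ 2 := by
      linear_combination (c ^ 2 * (l * D + t)) * hlD
    linear_combination (D ^ 2 / 3) * h - (ψ / 3) * e1 + (1 / 2) * e2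
  have hden : 2 * v + 2 / 3 * c * t = 2 * D := by ring
  rw [hden, hl]
  field_simp
  nlinarith

section Probability

variable {Ω : Type*} [MeasurableSpace Ω] {μ : Measure Ω}

lemma measureReal_ge_le_exp_of_mgf_le [IsFiniteMeasure μ] {X : Ω → ℝ} {v c t : ℝ}
    (hv : 0 ≤ v) (hc : 0 < c) (ht : 0 < t)
    (h_int : ∀ l, 0 ≤ l → Integrable (fun ω => exp (l * X ω)) μ)
    (h_mgf : ∀ l, 0 ≤ l → mgf X μ l ≤ exp (v * ((exp (l * c) - 1 - l * c) / c ^ 2))) :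
    μ.real {ω | t ≤ X ω} ≤ exp (-t ^ 2 / (2 * v + 2 / 3 * c * t)) := by
  set l := t / (v + c * t / 3) with hl_def
  have hl : 0 ≤ l := by positivity
  calc μ.real {ω | t ≤ X ω} ≤ exp (-l * t) * mgf X μ l :=
        measure_ge_le_exp_mul_mgf t hl (h_int l hl)
    _ ≤ exp (-l * t) * exp (v * ((exp (l * c) - 1 - l * c) / c ^ 2)) := by
        gcongr
        exact h_mgf l hl
    _ = exp (-(l * t) + v * ((exp (l * c) - 1 - l * c) / c ^ 2)) := by rw [← exp_add, neg_mul]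
    _ ≤ exp (-t ^ 2 / (2 * v + 2 / 3 * c * t)) :=
        exp_le_exp.2 (neg_mul_add_mul_exp_sub_one_sub_le hv hc ht hl_def)

lemma mgf_le_exp_variance_mul [IsProbabilityMeasure μ] {X : Ω → ℝ} {c l : ℝ} (hX : MemLp X 2 μ)
    (hmean : μ[X] = 0) (hc : 0 < c) (hbd : ∀ᵐ ω ∂μ, |X ω| ≤ c) (hl : 0 ≤ l) :
    mgf X μ l ≤ exp (variance X μ * ((exp (l * c) - 1 - l * c) / c ^ 2)) := by
  set κ := (exp (l * c) - 1 - l * c) / c ^ 2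
  have hX1 : Integrable X μ := hX.integrable one_le_two
  have hX2 : Integrable (fun ω => X ω ^ 2) μ := hX.integrable_sq
  have hexp : Integrable (fun ω => exp (l * X ω)) μ :=
    integrable_exp_mul_of_le l c hl hX.aestronglyMeasurable.aemeasurable
      (hbd.mono fun ω h => (abs_le.1 h).2)
  calc mgf X μ l ≤ ∫ ω, (1 + l * X ω + κ * X ω ^ 2) ∂μ :=
        integral_mono_ae hexp (((integrable_const 1).add (hX1.const_mul l)).add (hX2.const_mul κ))
          (hbd.mono fun ω h => exp_mul_le_one_add_add_sq hl hc h)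
    _ = 1 + variance X μ * κ := by
        have h1 : Integrable (fun ω => 1 + l * X ω) μ :=
          (integrable_const 1).add (hX1.const_mul l)
        rw [integral_add h1 (hX2.const_mul κ),
          integral_add (integrable_const 1) (hX1.const_mul l), integral_const_mul,
          integral_const_mul, hmean,
          variance_of_integral_eq_zero hX.aestronglyMeasurable.aemeasurable hmean]
        simp only [integral_const, probReal_univ, smul_eq_mul]
        ring
    _ ≤ exp (variance X μ * κ) := by linarith [add_one_le_exp (variance X μ * κ)]

namespace NegAssoc

variable [IsProbabilityMeasure μ] {N : ℕ} {Z : Fin N → Ω → ℝ}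

lemma integral_prod_le_prod_integral (hZ : NegAssoc μ Z) {f : Fin N → ℝ → ℝ}
    (hf_meas : ∀ i, Measurable (f i)) (hf_nonneg : ∀ i x, 0 ≤ f i x)
    (hf_bdd : ∀ i, BddAbove (Set.range (f i))) (hf_mono : ∀ i, Monotone (f i))
    (A : Finset (Fin N)) :
    ∫ ω, ∏ i ∈ A, f i (Z i ω) ∂μ ≤ ∏ i ∈ A, ∫ ω, f i (Z i ω) ∂μ := by
  induction A using Finset.induction_on with
  | empty => simp
  | insert i A hiA ih =>
    choose C hC using hf_bdd
    have hf_abs_le : ∀ j x, |f j x| ≤ C j := fun j x =>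
      (abs_of_nonneg (hf_nonneg j x)).trans_le (hC j (Set.mem_range_self x))
    have hcov := hZ {i} A (disjoint_singleton_left.2 hiA)
      (fun y => f i (y ⟨i, mem_singleton_self i⟩)) (fun y => ∏ j ∈ A.attach, f j (y j))
      ((hf_meas i).comp (measurable_pi_apply _))
      (Finset.measurable_prod _ fun j _ => (hf_meas j).comp (measurable_pi_apply j))
      ⟨C i, fun y => hf_abs_le i _⟩
      ⟨∏ j ∈ A.attach, C j, fun y => (abs_prod _ _).trans_le
        (prod_le_prod (fun j _ => abs_nonneg _) fun j _ => hf_abs_le j _)⟩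
      (fun y y' h => hf_mono i (h _))
      (fun y y' h => prod_le_prod (fun j _ => hf_nonneg _ _) fun j _ => hf_mono j (h j))
    have hattach : ∀ ω, ∏ j ∈ A.attach, f j (Z j ω) = ∏ j ∈ A, f j (Z j ω) := fun ω =>
      prod_attach A fun j => f j (Z j ω)
    simp only [hattach] at hcov
    simp only [prod_insert hiA]
    exact hcov.trans (mul_le_mul_of_nonneg_left ih (integral_nonneg fun ω => hf_nonneg _ _))

lemma mgf_sum_le_prod_mgf (hZ : NegAssoc μ Z) {c : ℝ} (hbd : ∀ i, ∀ᵐ ω ∂μ, Z i ω ≤ c)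
    {a : Fin N → ℝ} (ha : ∀ i, 0 ≤ a i) {l : ℝ} (hl : 0 ≤ l) :
    mgf (fun ω => ∑ i, a i * Z i ω) μ l ≤ ∏ i, mgf (fun ω => a i * Z i ω) μ l := by
  set f : Fin N → ℝ → ℝ := fun i x => exp (l * (a i * min x c))
  have htrunc : ∀ᵐ ω ∂μ, ∀ i, min (Z i ω) c = Z i ω :=
    (ae_all_iff.2 hbd).mono fun ω h i => min_eq_left (h i)
  have hsum : mgf (fun ω => ∑ i, a i * Z i ω) μ l = ∫ ω, ∏ i, f i (Z i ω) ∂μ :=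
    integral_congr_ae (htrunc.mono fun ω h => by simp only [f, h, mul_sum, exp_sum])
  have hterm : ∀ i, mgf (fun ω => a i * Z i ω) μ l = ∫ ω, f i (Z i ω) ∂μ := fun i =>
    integral_congr_ae (htrunc.mono fun ω h => by simp only [f, h])
  have hf_mono : ∀ i, Monotone (f i) := fun i x y hxy =>
    exp_le_exp.2 (mul_le_mul_of_nonneg_left
      (mul_le_mul_of_nonneg_left (min_le_min_right c hxy) (ha i)) hl)
  rw [hsum, prod_congr rfl fun i _ => hterm i]
  refine hZ.integral_prod_le_prod_integral (fun i => by fun_prop) (fun i x => (exp_pos _).le)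
    (fun i => ⟨f i c, ?_⟩) hf_mono univ
  rintro _ ⟨x, rfl⟩
  simpa only [f, min_assoc, min_self] using hf_mono i (min_le_right x c)

lemma mgf_sum_le_exp (hZ : NegAssoc μ Z) (hL2 : ∀ i, MemLp (Z i) 2 μ)
    (hmean : ∀ i, μ[Z i] = 0) {c : ℝ} (hc : 0 < c) (hbd : ∀ i, ∀ᵐ ω ∂μ, |Z i ω| ≤ c)
    {a : Fin N → ℝ} (ha : ∀ i, 0 ≤ a i ∧ a i ≤ 1) {l : ℝ} (hl : 0 ≤ l) :
    mgf (fun ω => ∑ i, a i * Z i ω) μ l ≤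
      exp ((∑ i, a i ^ 2 * variance (Z i) μ) * ((exp (l * c) - 1 - l * c) / c ^ 2)) := by
  have hterm : ∀ i, mgf (fun ω => a i * Z i ω) μ l ≤
      exp (a i ^ 2 * variance (Z i) μ * ((exp (l * c) - 1 - l * c) / c ^ 2)) := fun i => by
    rw [← variance_const_mul]
    refine mgf_le_exp_variance_mul ((hL2 i).const_mul (a i))
      (by rw [integral_const_mul, hmean i, mul_zero]) hc ((hbd i).mono fun ω h => ?_) hl
    rw [abs_mul, abs_of_nonneg (ha i).1]
    exact (mul_le_of_le_one_left (abs_nonneg _) (ha i).2).trans h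
  calc mgf (fun ω => ∑ i, a i * Z i ω) μ l ≤ ∏ i, mgf (fun ω => a i * Z i ω) μ l :=
        hZ.mgf_sum_le_prod_mgf (fun i => (hbd i).mono fun ω h => (abs_le.1 h).2)
          (fun i => (ha i).1) hl
    _ ≤ ∏ i, exp (a i ^ 2 * variance (Z i) μ * ((exp (l * c) - 1 - l * c) / c ^ 2)) :=
        prod_le_prod (fun i _ => mgf_nonneg) fun i _ => hterm i
    _ = _ := by rw [← exp_sum, sum_mul]

end NegAssoc

end Probability

theorem negAssoc_bernstein_general
    {Ω : Type*} [MeasurableSpace Ω] (μ : Measure Ω) [IsProbabilityMeasure μ]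
    {N : ℕ} (Z : Fin N → Ω → ℝ)
    (hL2 : ∀ i, MemLp (Z i) 2 μ)
    (hNA : NegAssoc μ Z)
    (c : ℝ) (hc : 0 < c) (hbd : ∀ i, ∀ᵐ ω ∂μ, |Z i ω| ≤ c)
    (hmean : ∀ i, ∫ ω, Z i ω ∂μ = 0)
    (a : Fin N → ℝ) (ha : ∀ i, 0 ≤ a i ∧ a i ≤ 1)
    (σ2 : ℝ) (hσ2 : σ2 = (1 / (N : ℝ)) * ∑ i, a i ^ 2 * variance (Z i) μ)
    (t : ℝ) (ht : 0 < t) :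
    μ {ω | ∑ i, a i * Z i ω ≥ t}
      ≤ ENNReal.ofReal
          (Real.exp (-t ^ 2 / (2 * (N : ℝ) * σ2 + (2 / 3) * c * t))) := by
  set v := ∑ i, a i ^ 2 * variance (Z i) μ
  have hv : 0 ≤ v := sum_nonneg fun i _ => mul_nonneg (sq_nonneg _) (variance_nonneg _ _)
  have hNσ2 : 2 * (N : ℝ) * σ2 = 2 * v := by
    rcases N.eq_zero_or_pos with rfl | hN
    · simp [v]
    · rw [hσ2]
      field_simp
  have hint : ∀ l, 0 ≤ l → Integrable (fun ω => exp (l * ∑ i, a i * Z i ω)) μ := fun l hl =>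
    integrable_exp_mul_of_le l (∑ i, a i * c) hl
      (Finset.aemeasurable_fun_sum _ fun i _ =>
        (hL2 i).aestronglyMeasurable.aemeasurable.const_mul _)
      ((ae_all_iff.2 hbd).mono fun ω h => sum_le_sum fun i _ =>
        mul_le_mul_of_nonneg_left (abs_le.1 (h i)).2 (ha i).1)
  rw [hNσ2, ← ofReal_measureReal]
  exact ENNReal.ofReal_le_ofReal (measureReal_ge_le_exp_of_mgf_le hv hc ht hint
    fun l hl => hNA.mgf_sum_le_exp hL2 hmean hc hbd ha hl)

/-- Bernstein inequality for sums of bounded, centered, negatively associated random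
variables. -/
theorem negAssoc_bernstein
    {Ω : Type*} [MeasurableSpace Ω] (μ : Measure Ω) [IsProbabilityMeasure μ]
    {N : ℕ} (hN : 1 ≤ N) (Z : Fin N → Ω → ℝ) (hmeas : ∀ i, Measurable (Z i))
    (hL2 : ∀ i, MemLp (Z i) 2 μ)
    (hNA : NegAssoc μ Z)
    (c : ℝ) (hc : 0 < c) (hbd : ∀ i, ∀ᵐ ω ∂μ, |Z i ω| ≤ c)
    (hmean : ∀ i, ∫ ω, Z i ω ∂μ = 0)
    (a : Fin N → ℝ) (ha : ∀ i, 0 ≤ a i ∧ a i ≤ 1)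
    (σ2 : ℝ) (hσ2 : σ2 = (1 / (N : ℝ)) * ∑ i, a i ^ 2 * variance (Z i) μ)
    (t : ℝ) (ht : 0 < t) :
    μ {ω | ∑ i, a i * Z i ω ≥ t}
      ≤ ENNReal.ofReal
          (Real.exp (-t ^ 2 / (2 * (N : ℝ) * σ2 + (2 / 3) * c * t))) :=
  negAssoc_bernstein_general μ Z hL2 hNA c hc hbd hmean a ha σ2 hσ2 t ht
end

section
/- Let ε*_N = (ε*_1,…,ε*_N) be a rejective sampling scheme of size n on {1,…,N} with canonical parameter p ∈ (0,1)^N, Σ p_i = n, and first-order inclusion probabilities π_i = P{ε*_i = 1} ∈ (0,1]. Let x_1,…,x_N be fixed real numbers, not all zero, and set A = Σ_{i=1}^N ((1−π_i)/π_i) x_i², B = max_{1≤i≤N} |x_i|/π_i, and Ŝ_π = Σ_{i=1}^N (ε*_i/π_i) x_i. Then for every t ≥ 0 and every N ≥ 1, P{ Ŝ_π − S_N ≥ t } ≤ 2 exp( −(A/B²) · H( Bt/(2A) ) ) ≤ 2 exp( −(t²/4) / ( (2/3)Bt + 2A ) ), where H(x) = (1+x)log(1+x) − x. -/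
open MeasureTheory ProbabilityTheory Real Finset

/-- The (unnormalized) weight of a sample `s` under Poisson weights `p`. -/
noncomputable def rejWeight {N : ℕ} (p : Fin N → ℝ) (s : Finset (Fin N)) : ℝ :=
  (∏ i ∈ s, p i) * ∏ i ∈ sᶜ, (1 - p i)

/-- `ε` is a rejective (conditional Poisson) sampling scheme of size `n` with
canonical parameter `p`: it is a `{0,1}`-valued random vector whose law puts, on each
subset `s` of cardinality `n`, probability proportional to
`∏_{i∈s} p i * ∏_{i∉s} (1 - p i)`, and zero probability elsewhere. -/
def IsRejective {Ω : Type*} [MeasurableSpace Ω] (μ : Measure Ω) {N : ℕ} (n : ℕ)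
    (p : Fin N → ℝ) (ε : Ω → Fin N → ℝ) : Prop :=
  (∀ ω i, ε ω i = 0 ∨ ε ω i = 1) ∧
  (∀ i, Measurable fun ω => ε ω i) ∧
  ∀ s : Finset (Fin N),
    μ {ω | ∀ i, ε ω i = if i ∈ s then 1 else 0} =
      if s.card = n then
        ENNReal.ofReal
          (rejWeight p s /
            ∑ u ∈ Finset.univ.filter (fun u : Finset (Fin N) => u.card = n), rejWeight p u)
      else 0

/-!
Write `r i = p i / (1 - p i)`. The rejective design draws a sample `s` of size `n` with
probability `∏ i ∈ s, r i / e_n(r)`, and conditioning on `a ∈ S` yields the design of size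
`n - 1` on the remaining units. Log-concavity of the elementary symmetric polynomials `e_k` shows
that this conditioning lowers every other inclusion probability, and induction on `T` gives the
negative dependence `P(T ⊆ S) ≤ ∏ i ∈ T, π i`.

These product-moment bounds are all that the Chernoff argument behind Bennett's inequality uses:
since `exp (λ c (ε i - π i))` is affine in `ε i ∈ {0, 1}`, the moment generating function of
`∑ c i (ε i - π i)` with `c ≥ 0` is at most the product of the two-point ones. The terms of
`Ŝ_π - S_N` with `x i ≥ 0` are of this form; those with `x i < 0` are handled in the same way
through `1 - ε`, which is rejective of size `N - n` with parameter `1 - p`. Each half exceeds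
`t / 2` with probability at most `exp (-(A / B²) H (B t / (2 A)))`, and the Bernstein form
follows from `H u ≥ 3 u² / (6 + 2 u)`.
-/

lemma nonneg_of_hasDerivAt_nonneg {f f' : ℝ → ℝ} (hf : ∀ x, 0 ≤ x → HasDerivAt f (f' x) x)
    (hf' : ∀ x, 0 < x → 0 ≤ f' x) (h0 : f 0 = 0) {x : ℝ} (hx : 0 ≤ x) : 0 ≤ f x := by
  have hmono : MonotoneOn f (Set.Ici 0) := by
    refine monotoneOn_of_hasDerivWithinAt_nonneg (f' := f') (convex_Ici 0)
      (fun y hy => (hf y hy).continuousAt.continuousWithinAt) (fun y hy => ?_) (fun y hy => ?_)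
    · rw [interior_Ici] at hy
      exact (hf y (le_of_lt hy)).hasDerivWithinAt
    · rw [interior_Ici] at hy
      exact hf' y hy
  simpa [h0] using hmono (Set.mem_Ici.2 le_rfl) hx hx

lemma exp_le_one_add_add_sq_div_two {x : ℝ} (hx : x ≤ 0) : exp x ≤ 1 + x + x ^ 2 / 2 := by
  have key : 0 ≤ 1 - -x + (-x) ^ 2 / 2 - exp (-(-x)) :=
    nonneg_of_hasDerivAt_nonneg (f := fun y => 1 - y + y ^ 2 / 2 - exp (-y))
      (fun y _ => (((hasDerivAt_id y).const_sub 1).add ((hasDerivAt_pow 2 y).div_const 2)).sub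
        (hasDerivAt_neg y).exp)
      (fun y _ => by nlinarith [add_one_le_exp (-y)]) (by simp) (neg_nonneg.2 hx)
  simp only [neg_neg] at key
  nlinarith

lemma exp_sub_one_sub_div_sq_monotoneOn :
    MonotoneOn (fun z : ℝ => (exp z - 1 - z) / z ^ 2) (Set.Ioi 0) := by
  have hψ : ∀ z, 0 ≤ z → 0 ≤ z * exp z + z - 2 * exp z + 2 := fun z hz =>
    nonneg_of_hasDerivAt_nonneg (fun y _ => ((((hasDerivAt_id y).mul (hasDerivAt_exp y)).add
      (hasDerivAt_id y)).sub ((hasDerivAt_exp y).const_mul 2)).add_const 2)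
      (fun y _ => by
        have h' : exp (-y) * exp y = 1 := by rw [← exp_add]; simp
        simp only [id, one_mul]
        nlinarith [exp_pos y, add_one_le_exp (-y)]) (by simp) hz
  have hderiv : ∀ z : ℝ, 0 < z → HasDerivAt (fun z => (exp z - 1 - z) / z ^ 2)
      ((z * exp z + z - 2 * exp z + 2) / z ^ 3) z := fun z hz =>
    ((hasDerivAt_exp z).sub_const 1).fun_sub (hasDerivAt_id' z) |>.fun_div
      (hasDerivAt_pow 2 z) (pow_ne_zero 2 hz.ne') |>.congr_deriv (by field_simp; ring)
  refine monotoneOn_of_hasDerivWithinAt_nonneg (convex_Ioi 0)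
    (f' := fun z => (z * exp z + z - 2 * exp z + 2) / z ^ 3)
    (fun z hz => (hderiv z hz).continuousAt.continuousWithinAt) (fun z hz => ?_) (fun z hz => ?_)
  · rw [interior_Ioi] at hz
    exact (hderiv z hz).hasDerivWithinAt
  · rw [interior_Ioi] at hz
    exact div_nonneg (hψ z (le_of_lt hz)) (pow_nonneg (le_of_lt hz) 3)

lemma exp_mul_le_one_add_add_sq_mul {κ w : ℝ} (hκ : 0 ≤ κ) (hw : w ≤ 1) :
    exp (κ * w) ≤ 1 + κ * w + w ^ 2 * (exp κ - 1 - κ) := by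
  rcases hκ.eq_or_lt with rfl | hκ
  · simp
  rcases le_or_gt w 0 with hw0 | hw0
  · have h1 := exp_le_one_add_add_sq_div_two (mul_nonpos_of_nonneg_of_nonpos hκ.le hw0)
    have h2 := quadratic_le_exp_of_nonneg hκ.le
    nlinarith [sq_nonneg w, mul_nonneg (sq_nonneg w) (sq_nonneg κ)]
  · have hmono := exp_sub_one_sub_div_sq_monotoneOn (mul_pos hκ hw0) hκ
      (mul_le_of_le_one_right hκ.le hw)
    simp only at hmono
    rw [div_le_div_iff₀ (by positivity) (by positivity)] at hmono
    have hκ2 : 0 < κ ^ 2 := by positivity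
    nlinarith

lemma hasDerivAt_entH {x : ℝ} (hx : -1 < x) : HasDerivAt entH (log (1 + x)) x := by
  have h1 : 1 + x ≠ 0 := by linarith
  refine (((hasDerivAt_id' x).const_add 1).fun_mul
    ((hasDerivAt_id' x).const_add 1 |>.log h1)).fun_sub (hasDerivAt_id' x) |>.congr_deriv ?_
  field_simp
  ring

lemma two_mul_le_two_add_mul_log_one_add {u : ℝ} (hu : 0 ≤ u) :
    2 * u ≤ (2 + u) * log (1 + u) := by
  have key := nonneg_of_hasDerivAt_nonneg (f := fun u => (2 + u) * log (1 + u) - 2 * u)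
    (f' := fun u => log (1 + u) + (2 + u) / (1 + u) - 2)
    (fun y hy => by
      refine (((hasDerivAt_id' y).const_add 2).fun_mul ((hasDerivAt_id' y).const_add 1 |>.log
        (by linarith))).fun_sub ((hasDerivAt_id' y).const_mul 2) |>.congr_deriv ?_
      ring)
    (fun y hy => by
      have h := one_sub_inv_le_log_of_pos (by linarith : 0 < 1 + y)
      have e : (2 + y) / (1 + y) - 2 = -(1 - (1 + y)⁻¹) := by field_simp; ring
      linarith)
    (by simp) hu
  linarith

lemma three_mul_sq_le_entH {u : ℝ} (hu : 0 ≤ u) : 3 * u ^ 2 ≤ (6 + 2 * u) * entH u := by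
  have key := nonneg_of_hasDerivAt_nonneg (f := fun u => (6 + 2 * u) * entH u - 3 * u ^ 2)
    (f' := fun u => 4 * ((2 + u) * log (1 + u) - 2 * u))
    (fun y hy => by
      refine (((hasDerivAt_id' y).const_mul 2 |>.const_add 6).fun_mul
        (hasDerivAt_entH (by linarith))).fun_sub ((hasDerivAt_pow 2 y).const_mul 3)
        |>.congr_deriv ?_
      simp only [entH]
      push_cast
      ring)
    (fun y hy => by linarith [two_mul_le_two_add_mul_log_one_add hy.le])
    (by simp [entH]) hu
  linarith

lemma entH_nonneg {u : ℝ} (hu : 0 ≤ u) : 0 ≤ entH u := by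
  nlinarith [three_mul_sq_le_entH hu, sq_nonneg u]

lemma bennett_exponent_le_bernstein {A B t : ℝ} (hA : 0 < A) (hB : 0 < B) (ht : 0 ≤ t) :
    -(A / B ^ 2) * entH (B * t / (2 * A)) ≤ -(t ^ 2 / 4) / ((2 / 3) * B * t + 2 * A) := by
  set u := B * t / (2 * A) with hu_def
  have hu : 0 ≤ u := by positivity
  have htu : t = 2 * A * u / B := by rw [hu_def]; field_simp
  have key := three_mul_sq_le_entH hu
  have hH := entH_nonneg hu
  rw [htu, neg_mul, neg_div, neg_le_neg_iff, div_le_iff₀ (by positivity)]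
  field_simp
  nlinarith [mul_nonneg (mul_nonneg hA.le hH) hu, mul_nonneg hA.le hH]

lemma two_point_mgf_le {p a κ : ℝ} (hp0 : 0 ≤ p) (hp1 : p ≤ 1) (ha0 : 0 ≤ a) (ha1 : a ≤ 1)
    (hκ : 0 ≤ κ) :
    p * exp (κ * (a * (1 - p))) + (1 - p) * exp (κ * (a * (0 - p)))
      ≤ exp (p * (1 - p) * a ^ 2 * (exp κ - 1 - κ)) := by
  have h1 := exp_mul_le_one_add_add_sq_mul hκ (show a * (1 - p) ≤ 1 by nlinarith)
  have h0 := exp_mul_le_one_add_add_sq_mul hκ (show a * (0 - p) ≤ 1 by nlinarith)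
  calc p * exp (κ * (a * (1 - p))) + (1 - p) * exp (κ * (a * (0 - p)))
      ≤ p * (1 + κ * (a * (1 - p)) + (a * (1 - p)) ^ 2 * (exp κ - 1 - κ))
        + (1 - p) * (1 + κ * (a * (0 - p)) + (a * (0 - p)) ^ 2 * (exp κ - 1 - κ)) :=
        add_le_add (mul_le_mul_of_nonneg_left h1 hp0)
          (mul_le_mul_of_nonneg_left h0 (by linarith))
    _ = 1 + p * (1 - p) * a ^ 2 * (exp κ - 1 - κ) := by ring
    _ ≤ _ := by linarith [add_one_le_exp (p * (1 - p) * a ^ 2 * (exp κ - 1 - κ))]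

section Bennett

variable {α ι : Type*} [Fintype α] [DecidableEq ι] (q : α → ℝ) (X : ι → α → ℝ) (P : Finset ι)
  (p : ι → ℝ)

lemma sum_mul_prod_le_of_moment_le
    (hmom : ∀ T ⊆ P, ∑ s, q s * ∏ i ∈ T, X i s ≤ ∏ i ∈ T, p i) {u v : ι → ℝ}
    (hu : ∀ i ∈ P, 0 ≤ u i) (hv : ∀ i ∈ P, 0 ≤ v i) :
    ∑ s, q s * ∏ i ∈ P, (v i * X i s + u i) ≤ ∏ i ∈ P, (v i * p i + u i) := by
  simp_rw [Finset.prod_add, Finset.mul_sum, Finset.prod_mul_distrib]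
  rw [Finset.sum_comm]
  refine Finset.sum_le_sum fun T hT => ?_
  rw [Finset.mem_powerset] at hT
  have hw : 0 ≤ (∏ i ∈ T, v i) * ∏ i ∈ P \ T, u i :=
    mul_nonneg (Finset.prod_nonneg fun i hi => hv i (hT hi))
      (Finset.prod_nonneg fun i hi => hu i (Finset.mem_sdiff.1 hi).1)
  calc ∑ s, q s * ((∏ i ∈ T, v i) * (∏ i ∈ T, X i s) * ∏ i ∈ P \ T, u i)
      = (∑ s, q s * ∏ i ∈ T, X i s) * ((∏ i ∈ T, v i) * ∏ i ∈ P \ T, u i) := by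
        rw [Finset.sum_mul]
        exact Finset.sum_congr rfl fun s _ => by ring
    _ ≤ (∏ i ∈ T, p i) * ((∏ i ∈ T, v i) * ∏ i ∈ P \ T, u i) :=
        mul_le_mul_of_nonneg_right (hmom T hT) hw
    _ = (∏ i ∈ T, v i) * (∏ i ∈ T, p i) * ∏ i ∈ P \ T, u i := by ring

lemma sum_mul_exp_le (hX : ∀ i s, X i s = 0 ∨ X i s = 1) (hp : ∀ i ∈ P, 0 ≤ p i ∧ p i ≤ 1)
    (hmom : ∀ T ⊆ P, ∑ s, q s * ∏ i ∈ T, X i s ≤ ∏ i ∈ T, p i) {a : ι → ℝ}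
    (ha : ∀ i ∈ P, 0 ≤ a i ∧ a i ≤ 1) {V κ : ℝ}
    (hvar : ∑ i ∈ P, p i * (1 - p i) * a i ^ 2 ≤ V) (hκ : 0 ≤ κ) :
    ∑ s, q s * exp (κ * ∑ i ∈ P, a i * (X i s - p i)) ≤ exp (V * (exp κ - 1 - κ)) := by
  set u : ι → ℝ := fun i => exp (κ * (a i * (0 - p i)))
  set v : ι → ℝ := fun i => exp (κ * (a i * (1 - p i))) - u i
  have hlin : ∀ i s, exp (κ * (a i * (X i s - p i))) = v i * X i s + u i := fun i s => by
    rcases hX i s with h | h <;> simp [h, u, v]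
  have hv : ∀ i ∈ P, 0 ≤ v i := fun i hi => by
    simp only [v, u, sub_nonneg, exp_le_exp]
    have := (ha i hi).1
    have := hp i hi
    nlinarith
  calc ∑ s, q s * exp (κ * ∑ i ∈ P, a i * (X i s - p i))
      = ∑ s, q s * ∏ i ∈ P, (v i * X i s + u i) := by
        simp_rw [Finset.mul_sum, exp_sum, hlin]
    _ ≤ ∏ i ∈ P, (v i * p i + u i) :=
        sum_mul_prod_le_of_moment_le q X P p hmom (fun i _ => (exp_pos _).le) hv
    _ ≤ ∏ i ∈ P, exp (p i * (1 - p i) * a i ^ 2 * (exp κ - 1 - κ)) := by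
        refine Finset.prod_le_prod (fun i hi => ?_) (fun i hi => ?_)
        · exact add_nonneg (mul_nonneg (hv i hi) (hp i hi).1) (exp_pos _).le
        · have := two_point_mgf_le (hp i hi).1 (hp i hi).2 (ha i hi).1 (ha i hi).2 hκ
          simp only [v, u]
          linarith
    _ ≤ exp (V * (exp κ - 1 - κ)) := by
        rw [← exp_sum, exp_le_exp, ← Finset.sum_mul]
        exact mul_le_mul_of_nonneg_right hvar (by linarith [add_one_le_exp κ])

/-- Bennett's inequality, for indicators whose product moments are dominated by those of
independent ones. -/
theorem sum_le_exp_neg_entH (hq : ∀ s, 0 ≤ q s) (hX : ∀ i s, X i s = 0 ∨ X i s = 1)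
    (hp : ∀ i ∈ P, 0 ≤ p i ∧ p i ≤ 1) (hmom : ∀ T ⊆ P, ∑ s, q s * ∏ i ∈ T, X i s ≤ ∏ i ∈ T, p i)
    {c : ι → ℝ} {A B t : ℝ} (hA : 0 < A) (hB : 0 < B) (ht : 0 ≤ t)
    (hc : ∀ i ∈ P, 0 ≤ c i ∧ c i ≤ B) (hvar : ∑ i ∈ P, p i * (1 - p i) * c i ^ 2 ≤ A) :
    ∑ s with t ≤ ∑ i ∈ P, c i * (X i s - p i), q s ≤ exp (-(A / B ^ 2) * entH (B * t / A)) := by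
  -- the Chernoff parameter `κ / B` that minimises Bennett's bound
  set κ := log (1 + B * t / A)
  have hu : 0 ≤ B * t / A := by positivity
  have hκ : 0 ≤ κ := log_nonneg (by linarith)
  have hexpκ : exp κ = 1 + B * t / A := exp_log (by linarith)
  set S : α → ℝ := fun s => ∑ i ∈ P, c i / B * (X i s - p i)
  have hS : ∀ s, ∑ i ∈ P, c i * (X i s - p i) = B * S s := fun s => by
    simp only [S, Finset.mul_sum]
    exact Finset.sum_congr rfl fun i _ => by field_simp
  have hmgf := sum_mul_exp_le q X P p hX hp hmom (a := fun i => c i / B)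
    (fun i hi => ⟨div_nonneg (hc i hi).1 hB.le, (div_le_one hB).2 (hc i hi).2⟩)
    (V := A / B ^ 2) (by
      calc ∑ i ∈ P, p i * (1 - p i) * (c i / B) ^ 2
          = (∑ i ∈ P, p i * (1 - p i) * c i ^ 2) / B ^ 2 := by
            rw [Finset.sum_div]
            exact Finset.sum_congr rfl fun i _ => by ring
        _ ≤ A / B ^ 2 := by gcongr) hκ
  calc ∑ s with t ≤ ∑ i ∈ P, c i * (X i s - p i), q s
      ≤ ∑ s, q s * exp (κ * S s - κ * t / B) := by
        rw [Finset.sum_filter]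
        refine Finset.sum_le_sum fun s _ => ?_
        split_ifs with h
        · rw [hS] at h
          have : 0 ≤ κ * S s - κ * t / B := by
            rw [sub_nonneg, mul_div_assoc]
            exact mul_le_mul_of_nonneg_left ((div_le_iff₀' hB).2 h) hκ
          nlinarith [hq s, one_le_exp this]
        · exact mul_nonneg (hq s) (exp_pos _).le
    _ = exp (-(κ * t / B)) * ∑ s, q s * exp (κ * S s) := by
        rw [Finset.mul_sum]
        exact Finset.sum_congr rfl fun s _ => by rw [sub_eq_add_neg, exp_add]; ring
    _ ≤ exp (-(κ * t / B)) * exp (A / B ^ 2 * (exp κ - 1 - κ)) :=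
        mul_le_mul_of_nonneg_left hmgf (exp_pos _).le
    _ = exp (-(A / B ^ 2) * entH (B * t / A)) := by
        have hH : entH (B * t / A) = (1 + B * t / A) * κ - B * t / A := rfl
        rw [← exp_add, hexpκ, hH]
        congr 1
        field_simp
        ring

end Bennett

lemma mul_le_mul_of_mul_le_sq {a b c d : ℝ} (hb : 0 < b) (hc : 0 < c) (hd : 0 ≤ d)
    (habc : a * c ≤ b ^ 2) (hbcd : b * d ≤ c ^ 2) : a * d ≤ b * c := by
  have h := mul_le_mul habc hbcd (by positivity) (by positivity)
  exact le_of_mul_le_mul_right (by nlinarith) (mul_pos hb hc)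

section ConditionalPoisson

variable {ι : Type*} [DecidableEq ι] {r : ι → ℝ}

/-- Unnormalised conditional Poisson mass of `{S ⊇ T}` (samples of size `n` from `U`, odds `r`);
`cpMass r U n ∅` is the elementary symmetric polynomial `e_n(r i : i ∈ U)`. -/
noncomputable def cpMass (r : ι → ℝ) (U : Finset ι) (n : ℕ) (T : Finset ι) : ℝ :=
  ∑ s ∈ U.powersetCard n with T ⊆ s, ∏ i ∈ s, r i

lemma cpMass_insert {a : ι} {U : Finset ι} (ha : a ∉ U) (k : ℕ) (T : Finset ι) :
    cpMass r (insert a U) (k + 1) T = cpMass r U (k + 1) T + r a * cpMass r U k (T.erase a) := by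
  have hnot : ∀ {s}, s ∈ U.powersetCard k → a ∉ s := fun hs h =>
    ha ((Finset.mem_powersetCard.1 hs).1 h)
  have hinj : Set.InjOn (insert a) (U.powersetCard k : Set (Finset ι)) := fun s hs s' hs' h => by
    have ha_s := hnot (Finset.mem_coe.1 hs)
    have ha_s' := hnot (Finset.mem_coe.1 hs')
    rw [← Finset.erase_insert ha_s, ← Finset.erase_insert ha_s']
    exact congrArg (·.erase a) h
  have hdisj : Disjoint (U.powersetCard (k + 1)) ((U.powersetCard k).image (insert a)) := by
    refine Finset.disjoint_right.2 fun s hs hs' => ?_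
    obtain ⟨s, -, rfl⟩ := Finset.mem_image.1 hs
    exact ha ((Finset.mem_powersetCard.1 hs').1 (Finset.mem_insert_self a s))
  rw [cpMass, Finset.powersetCard_succ_insert ha, Finset.filter_union, Finset.sum_union
    (Finset.disjoint_filter_filter hdisj), Finset.filter_image, Finset.sum_image
    (hinj.mono (Finset.filter_subset _ _)), cpMass, cpMass, Finset.mul_sum]
  congr 1
  refine Finset.sum_congr (by ext s; simp [Finset.subset_insert_iff]) fun s hs => ?_
  rw [Finset.prod_insert (hnot (Finset.mem_filter.1 hs).1)]

lemma cpMass_empty_insert {a : ι} {U : Finset ι} (ha : a ∉ U) (k : ℕ) :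
    cpMass r (insert a U) (k + 1) ∅ = cpMass r U (k + 1) ∅ + r a * cpMass r U k ∅ := by
  simpa using cpMass_insert (r := r) ha k ∅

lemma cpMass_eq_zero_of_not_subset {U T : Finset ι} (h : ¬ T ⊆ U) (n : ℕ) : cpMass r U n T = 0 :=
  Finset.sum_eq_zero fun _ hs => absurd ((Finset.mem_filter.1 hs).2.trans
    (Finset.mem_powersetCard.1 (Finset.mem_filter.1 hs).1).1) h

lemma cpMass_zero (U T : Finset ι) : cpMass r U 0 T = if T = ∅ then 1 else 0 := by
  by_cases hT : T = ∅
  · simp [cpMass, hT]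
  · simp [cpMass, Finset.filter_singleton, Finset.subset_empty, hT]

lemma cpMass_succ_insert_of_mem {a : ι} {U T : Finset ι} (ha : a ∈ U) (haT : a ∉ T) (k : ℕ) :
    cpMass r U (k + 1) (insert a T) = r a * cpMass r (U.erase a) k T := by
  conv_lhs => rw [← Finset.insert_erase ha]
  rw [cpMass_insert (Finset.notMem_erase a U), Finset.erase_insert haT,
    cpMass_eq_zero_of_not_subset fun h => Finset.notMem_erase a U (h (Finset.mem_insert_self a T)),
    zero_add]

lemma cpMass_empty_succ_of_mem {a : ι} {U : Finset ι} (ha : a ∈ U) (k : ℕ) :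
    cpMass r U (k + 1) ∅ = cpMass r (U.erase a) (k + 1) ∅ + r a * cpMass r (U.erase a) k ∅ := by
  conv_lhs => rw [← Finset.insert_erase ha]
  exact cpMass_empty_insert (Finset.notMem_erase a U) k

lemma cpMass_nonneg (hr : ∀ i, 0 < r i) (U : Finset ι) (n : ℕ) (T : Finset ι) :
    0 ≤ cpMass r U n T :=
  Finset.sum_nonneg fun _ _ => Finset.prod_nonneg fun i _ => (hr i).le

lemma cpMass_empty_pos (hr : ∀ i, 0 < r i) {U : Finset ι} {n : ℕ} (hn : n ≤ U.card) :
    0 < cpMass r U n ∅ := by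
  obtain ⟨s, hsU, hs⟩ := Finset.exists_subset_card_eq hn
  exact Finset.sum_pos' (fun _ _ => Finset.prod_nonneg fun i _ => (hr i).le)
    ⟨s, by simp [Finset.mem_powersetCard, hsU, hs], Finset.prod_pos fun i _ => hr i⟩

lemma cpMass_empty_eq_zero {U : Finset ι} {n : ℕ} (hn : U.card < n) : cpMass r U n ∅ = 0 := by
  simp [cpMass, Finset.powersetCard_eq_empty.2 hn]

/-- Log-concavity of `k ↦ e_k`, a weak form of Newton's inequalities. -/
theorem cpMass_empty_mul_le_sq (hr : ∀ i, 0 < r i) (U : Finset ι) (k : ℕ) :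
    cpMass r U k ∅ * cpMass r U (k + 2) ∅ ≤ cpMass r U (k + 1) ∅ ^ 2 := by
  induction U using Finset.induction_on generalizing k with
  | empty =>
    rw [cpMass_empty_eq_zero (show (∅ : Finset ι).card < k + 2 by simp), mul_zero]
    positivity
  | insert x U hx ih =>
    have e0 := cpMass_nonneg hr U
    have hx0 := (hr x).le
    have hgap : ∀ m, cpMass r U m ∅ * cpMass r U (m + 3) ∅
        ≤ cpMass r U (m + 1) ∅ * cpMass r U (m + 2) ∅ := fun m => by
      rcases lt_or_ge U.card (m + 3) with h | h
      · rw [cpMass_empty_eq_zero h, mul_zero]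
        exact mul_nonneg (e0 _ _) (e0 _ _)
      · exact mul_le_mul_of_mul_le_sq (cpMass_empty_pos hr (by omega))
          (cpMass_empty_pos hr (by omega)) (e0 _ _) (ih m) (ih (m + 1))
    cases k with
    | zero =>
      have := ih 0
      simp only [cpMass_zero, if_true, one_mul] at this ⊢
      rw [cpMass_empty_insert hx, cpMass_empty_insert hx, cpMass_zero, if_pos rfl]
      nlinarith [e0 1 ∅]
    | succ m =>
      rw [cpMass_empty_insert hx, cpMass_empty_insert hx, cpMass_empty_insert hx]
      nlinarith [ih m, ih (m + 1), hgap m, mul_le_mul_of_nonneg_left (hgap m) hx0,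
        mul_le_mul_of_nonneg_left (ih m) (mul_nonneg hx0 hx0), e0 m ∅, e0 (m + 1) ∅,
        e0 (m + 2) ∅, e0 (m + 3) ∅]

/-- Conditioning on `a ∈ S` lowers the inclusion probability of every other unit. -/
lemma cpMass_erase_div_le (hr : ∀ i, 0 < r i) {a i : ι} {U : Finset ι} (ha : a ∈ U) (hia : i ≠ a)
    {k : ℕ} (hk : k + 1 ≤ U.card) :
    cpMass r (U.erase a) k {i} / cpMass r (U.erase a) k ∅
      ≤ cpMass r U (k + 1) {i} / cpMass r U (k + 1) ∅ := by
  have hR : 0 ≤ cpMass r U (k + 1) {i} / cpMass r U (k + 1) ∅ :=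
    div_nonneg (cpMass_nonneg hr _ _ _) (cpMass_nonneg hr _ _ _)
  by_cases hi : i ∈ U
  swap
  · rw [cpMass_eq_zero_of_not_subset (by simpa using fun h => hi (Finset.mem_of_mem_erase h)),
      zero_div]
    exact hR
  cases k with
  | zero => simpa [cpMass_zero] using hR
  | succ j =>
    have hiU' : i ∈ U.erase a := Finset.mem_erase.2 ⟨hia, hi⟩
    have haU' : a ∈ U.erase i := Finset.mem_erase.2 ⟨hia.symm, ha⟩
    have hcard : (U.erase a).card = U.card - 1 := Finset.card_erase_of_mem ha
    set V := (U.erase a).erase i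
    have hV : (U.erase i).erase a = V := Finset.erase_right_comm
    have hL_pos : 0 < cpMass r (U.erase a) (j + 1) ∅ := cpMass_empty_pos hr (by omega)
    have hR_pos : 0 < cpMass r U (j + 2) ∅ := cpMass_empty_pos hr hk
    have hL_num : cpMass r (U.erase a) (j + 1) {i} = r i * cpMass r V j ∅ := by
      simpa using cpMass_succ_insert_of_mem hiU' (Finset.notMem_empty i) j
    have hL_den : cpMass r (U.erase a) (j + 1) ∅
        = cpMass r V (j + 1) ∅ + r i * cpMass r V j ∅ := cpMass_empty_succ_of_mem hiU' j
    have hR_num : cpMass r U (j + 2) {i}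
        = r i * (cpMass r V (j + 1) ∅ + r a * cpMass r V j ∅) := by
      rw [← hV, ← cpMass_empty_succ_of_mem haU']
      simpa using cpMass_succ_insert_of_mem hi (Finset.notMem_empty i) (j + 1)
    have hR_den : cpMass r U (j + 2) ∅ = cpMass r V (j + 2) ∅ + r i * cpMass r V (j + 1) ∅
        + r a * (cpMass r V (j + 1) ∅ + r i * cpMass r V j ∅) := by
      rw [cpMass_empty_succ_of_mem ha (j + 1), cpMass_empty_succ_of_mem hiU' (j + 1), hL_den]
    rw [div_le_div_iff₀ hL_pos hR_pos, hL_num, hL_den, hR_num, hR_den]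
    have e0 := cpMass_nonneg hr V
    nlinarith [cpMass_empty_mul_le_sq hr V j, mul_pos (hr a) (hr i), (hr i).le, e0 j ∅,
      e0 (j + 1) ∅, e0 (j + 2) ∅]

/-- Negative dependence: `P(T ⊆ S) ≤ ∏ i ∈ T, P(i ∈ S)`. -/
theorem cpMass_div_le_prod (hr : ∀ i, 0 < r i) (T : Finset ι) {U : Finset ι} {n : ℕ}
    (hn : n ≤ U.card) :
    cpMass r U n T / cpMass r U n ∅ ≤ ∏ i ∈ T, cpMass r U n {i} / cpMass r U n ∅ := by
  induction T using Finset.induction_on generalizing U n with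
  | empty => exact (div_self (cpMass_empty_pos hr hn).ne').le.trans (by simp)
  | insert a T haT ih =>
    have hprod : 0 ≤ ∏ i ∈ insert a T, cpMass r U n {i} / cpMass r U n ∅ :=
      Finset.prod_nonneg fun _ _ => div_nonneg (cpMass_nonneg hr _ _ _) (cpMass_nonneg hr _ _ _)
    by_cases haU : a ∈ U
    swap
    · rwa [cpMass_eq_zero_of_not_subset (fun h => haU (h (Finset.mem_insert_self a T))), zero_div]
    cases n with
    | zero => rwa [cpMass_zero, if_neg (Finset.insert_ne_empty a T), zero_div]
    | succ k =>
      have hk : k ≤ (U.erase a).card := by rw [Finset.card_erase_of_mem haU]; omega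
      have hmarg : cpMass r U (k + 1) {a} = r a * cpMass r (U.erase a) k ∅ := by
        simpa using cpMass_succ_insert_of_mem haU (Finset.notMem_empty a) k
      have hpos := cpMass_empty_pos hr hk
      calc cpMass r U (k + 1) (insert a T) / cpMass r U (k + 1) ∅
          = cpMass r U (k + 1) {a} / cpMass r U (k + 1) ∅
            * (cpMass r (U.erase a) k T / cpMass r (U.erase a) k ∅) := by
            rw [cpMass_succ_insert_of_mem haU haT, hmarg]
            field_simp
        _ ≤ cpMass r U (k + 1) {a} / cpMass r U (k + 1) ∅
            * ∏ i ∈ T, cpMass r U (k + 1) {i} / cpMass r U (k + 1) ∅ := by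
            refine mul_le_mul_of_nonneg_left ((ih hk).trans (Finset.prod_le_prod
              (fun i _ => div_nonneg (cpMass_nonneg hr _ _ _) (cpMass_nonneg hr _ _ _))
              fun i hi => cpMass_erase_div_le hr haU (ne_of_mem_of_not_mem hi haT) (by omega)))
              (div_nonneg (cpMass_nonneg hr _ _ _) (cpMass_nonneg hr _ _ _))
        _ = _ := by rw [Finset.prod_insert haT]

end ConditionalPoisson

noncomputable def odds {ι : Type*} (p : ι → ℝ) (i : ι) : ℝ := p i / (1 - p i)

lemma odds_pos {ι : Type*} {p : ι → ℝ} (hp : ∀ i, 0 < p i ∧ p i < 1) (i : ι) : 0 < odds p i :=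
  div_pos (hp i).1 (sub_pos.2 (hp i).2)

section RejectiveDesign

variable {N : ℕ}

noncomputable def rejProb (p : Fin N → ℝ) (n : ℕ) (s : Finset (Fin N)) : ℝ :=
  if s.card = n then rejWeight p s / ∑ u with u.card = n, rejWeight p u else 0

noncomputable def inclProb (p : Fin N → ℝ) (n : ℕ) (i : Fin N) : ℝ :=
  ∑ s with i ∈ s, rejProb p n s

lemma rejWeight_eq_mul_prod_odds {p : Fin N → ℝ} (hp : ∀ i, p i < 1) (s : Finset (Fin N)) :
    rejWeight p s = (∏ i, (1 - p i)) * ∏ i ∈ s, odds p i := by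
  have hodds : ∏ i ∈ s, p i = (∏ i ∈ s, (1 - p i)) * ∏ i ∈ s, odds p i := by
    rw [← Finset.prod_mul_distrib]
    exact Finset.prod_congr rfl fun i _ => by rw [odds, mul_div_cancel₀ _ (sub_pos.2 (hp i)).ne']
  rw [rejWeight, ← Finset.prod_mul_prod_compl s fun i => 1 - p i, hodds]
  ring

variable {p : Fin N → ℝ}

/-- The rejective design is the conditional Poisson design with odds `p i / (1 - p i)`. -/
lemma sum_rejProb_subset (hp : ∀ i, 0 < p i ∧ p i < 1) (n : ℕ) (T : Finset (Fin N)) :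
    ∑ s with T ⊆ s, rejProb p n s
      = cpMass (odds p) Finset.univ n T
        / cpMass (odds p) Finset.univ n ∅ := by
  have hfilter : ∀ T : Finset (Fin N), ({s | T ⊆ s} : Finset (Finset (Fin N))).filter
      (·.card = n) = (Finset.univ.powersetCard n).filter (T ⊆ ·) := fun T => by
    ext s; simp [and_comm]
  have hC : 0 < ∏ i, (1 - p i) := Finset.prod_pos fun i _ => sub_pos.2 (hp i).2
  simp only [rejProb, ← Finset.sum_filter, hfilter, cpMass, Finset.empty_subset]
  have hcard : ({u | u.card = n} : Finset (Finset (Fin N))) = Finset.univ.powersetCard n := by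
    ext u; simp
  rw [Finset.filter_true, ← Finset.sum_div, hcard]
  simp only [rejWeight_eq_mul_prod_odds (fun i => (hp i).2), ← Finset.mul_sum]
  exact mul_div_mul_left _ _ hC.ne'

lemma rejProb_nonneg (hp : ∀ i, 0 < p i ∧ p i < 1) (n : ℕ) (s : Finset (Fin N)) :
    0 ≤ rejProb p n s := by
  have hw : ∀ u, 0 ≤ rejWeight p u := fun u => mul_nonneg
    (Finset.prod_nonneg fun i _ => (hp i).1.le) (Finset.prod_nonneg fun i _ => by linarith [hp i])
  unfold rejProb
  split_ifs
  exacts [div_nonneg (hw s) (Finset.sum_nonneg fun u _ => hw u), le_rfl]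

lemma sum_rejProb (hp : ∀ i, 0 < p i ∧ p i < 1) {n : ℕ} (hn : n ≤ N) :
    ∑ s, rejProb p n s = 1 := by
  simpa using (sum_rejProb_subset hp n ∅).trans (div_self (cpMass_empty_pos
    (odds_pos hp) (by simpa using hn)).ne')

lemma inclProb_nonneg (hp : ∀ i, 0 < p i ∧ p i < 1) (n : ℕ) (i : Fin N) : 0 ≤ inclProb p n i :=
  Finset.sum_nonneg fun s _ => rejProb_nonneg hp n s

lemma inclProb_le_one (hp : ∀ i, 0 < p i ∧ p i < 1) {n : ℕ} (hn : n ≤ N) (i : Fin N) :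
    inclProb p n i ≤ 1 :=
  (Finset.sum_le_univ_sum_of_nonneg fun s => rejProb_nonneg hp n s).trans_eq (sum_rejProb hp hn)

lemma inclProb_eq (hp : ∀ i, 0 < p i ∧ p i < 1) (n : ℕ) (i : Fin N) :
    inclProb p n i = cpMass (odds p) Finset.univ n {i}
      / cpMass (odds p) Finset.univ n ∅ := by
  simpa [inclProb] using sum_rejProb_subset hp n {i}

theorem sum_rejProb_subset_le_prod (hp : ∀ i, 0 < p i ∧ p i < 1) {n : ℕ} (hn : n ≤ N)
    (T : Finset (Fin N)) : ∑ s with T ⊆ s, rejProb p n s ≤ ∏ i ∈ T, inclProb p n i := by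
  simp only [sum_rejProb_subset hp, inclProb_eq hp]
  exact cpMass_div_le_prod (odds_pos hp) T (by simpa using hn)

lemma rejProb_compl {n : ℕ} (hn : n ≤ N) (s : Finset (Fin N)) :
    rejProb (fun i => 1 - p i) (N - n) s = rejProb p n sᶜ := by
  have hw : ∀ u, rejWeight (fun i => 1 - p i) u = rejWeight p uᶜ := fun u => by
    simp [rejWeight, mul_comm]
  have hcard : ∀ u : Finset (Fin N), u.card = N - n ↔ uᶜ.card = n := fun u => by
    have := u.card_le_univ
    rw [Finset.card_compl, Fintype.card_fin]
    simp only [Fintype.card_fin] at this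
    omega
  have hZ : ∑ u with u.card = N - n, rejWeight (fun i => 1 - p i) u
      = ∑ u with u.card = n, rejWeight p u :=
    Finset.sum_nbij' compl compl (by simp [hcard]) (by simp [hcard]) (by simp) (by simp)
      fun u _ => hw u
  rw [rejProb, rejProb, hZ]
  simp only [hw, hcard]

lemma inclProb_compl (hp : ∀ i, 0 < p i ∧ p i < 1) {n : ℕ} (hn : n ≤ N) (i : Fin N) :
    inclProb (fun i => 1 - p i) (N - n) i = 1 - inclProb p n i := by
  have hsplit := Finset.sum_filter_add_sum_filter_not Finset.univ (i ∈ ·) (rejProb p n)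
  have hswap : inclProb (fun i => 1 - p i) (N - n) i = ∑ u with i ∉ u, rejProb p n u :=
    Finset.sum_nbij' compl compl (by simp) (by simp) (by simp) (by simp)
      fun u _ => rejProb_compl hn u
  rw [hswap, inclProb]
  linarith [sum_rejProb hp hn]

lemma inclProb_pos (hp : ∀ i, 0 < p i ∧ p i < 1) {n : ℕ} (hn0 : 0 < n) (hn : n ≤ N)
    (i : Fin N) : 0 < inclProb p n i := by
  obtain ⟨k, rfl⟩ := Nat.exists_eq_add_of_lt hn0
  rw [inclProb_eq hp, ← insert_empty_eq i,
    cpMass_succ_insert_of_mem (Finset.mem_univ i) (Finset.notMem_empty i)]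
  exact div_pos (mul_pos (odds_pos hp i) (cpMass_empty_pos (odds_pos hp) (by simp; omega)))
    (cpMass_empty_pos (odds_pos hp) (by simp; omega))

lemma inclProb_lt_one (hp : ∀ i, 0 < p i ∧ p i < 1) {n : ℕ} (hn : n < N) (i : Fin N) :
    inclProb p n i < 1 := by
  have := inclProb_pos (fun i => ⟨sub_pos.2 (hp i).2, by linarith [hp i]⟩)
    (Nat.sub_pos_of_lt hn) (Nat.sub_le N n) i
  rw [inclProb_compl hp hn.le] at this
  linarith

lemma ofReal_rejProb (p : Fin N → ℝ) (n : ℕ) (s : Finset (Fin N)) :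
    ENNReal.ofReal (rejProb p n s) = if s.card = n then
      ENNReal.ofReal (rejWeight p s / ∑ u with u.card = n, rejWeight p u) else 0 := by
  rw [rejProb]
  split_ifs <;> simp

end RejectiveDesign

noncomputable def sampleOf {Ω ι : Type*} [Fintype ι] (ε : Ω → ι → ℝ) (ω : Ω) : Finset ι :=
  {i | ε ω i = 1}

lemma sum_div_mul_sub_sum_eq {ι : Type*} [Fintype ι] (y w x : ι → ℝ) (hw : ∀ i, w i ≠ 0) :
    ∑ i, y i / w i * x i - ∑ i, x i
      = ∑ i with 0 ≤ x i, x i / w i * (y i - w i)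
        + ∑ i with ¬ 0 ≤ x i, -(x i / w i) * ((1 - y i) - (1 - w i)) := by
  rw [← Finset.sum_sub_distrib, ← Finset.sum_filter_add_sum_filter_not _ (0 ≤ x ·)]
  congr 1
  · exact Finset.sum_congr rfl fun i _ => by field_simp [hw i]
  · exact Finset.sum_congr rfl fun i _ => by field_simp [hw i]; ring

lemma measure_sum_div_mul_sub_sum_ge_le {Ω ι : Type*} [MeasurableSpace Ω] [Fintype ι]
    (μ : Measure Ω) (y : Ω → ι → ℝ) (w x : ι → ℝ) (hw : ∀ i, w i ≠ 0) (t : ℝ) :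
    μ {ω | ∑ i, (y ω i / w i) * x i - ∑ i, x i ≥ t}
      ≤ μ {ω | t / 2 ≤ ∑ i with 0 ≤ x i, x i / w i * (y ω i - w i)}
        + μ {ω | t / 2 ≤ ∑ i with ¬ 0 ≤ x i, -(x i / w i) * ((1 - y ω i) - (1 - w i))} := by
  refine (measure_mono fun ω hω => ?_).trans (measure_union_le _ _)
  rw [Set.mem_ofPred_eq, ge_iff_le, sum_div_mul_sub_sum_eq _ _ _ hw] at hω
  simp only [Set.mem_union, Set.mem_ofPred_eq]
  by_contra h
  rw [not_or, not_le, not_le] at h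
  linarith [h.1, h.2]

namespace IsRejective

variable {Ω : Type*} [MeasurableSpace Ω] {μ : Measure Ω} {N n : ℕ} {p : Fin N → ℝ}
  {ε : Ω → Fin N → ℝ}

lemma eq_ite_mem_sampleOf (hrej : IsRejective μ n p ε) (ω : Ω) (i : Fin N) :
    ε ω i = if i ∈ sampleOf ε ω then 1 else 0 := by
  rcases hrej.1 ω i with h | h <;> simp [sampleOf, h]

lemma sampleOf_preimage_singleton (hrej : IsRejective μ n p ε) (s : Finset (Fin N)) :
    sampleOf ε ⁻¹' {s} = {ω | ∀ i, ε ω i = if i ∈ s then 1 else 0} := by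
  ext ω
  simp only [Set.mem_preimage, Set.mem_singleton_iff]
  constructor
  · rintro rfl i
    exact hrej.eq_ite_mem_sampleOf ω i
  · intro h
    ext i
    simp [sampleOf, h i]

lemma measure_sampleOf_preimage (hrej : IsRejective μ n p ε) (hp : ∀ i, 0 < p i ∧ p i < 1)
    (𝒮 : Finset (Finset (Fin N))) :
    μ (sampleOf ε ⁻¹' 𝒮) = ENNReal.ofReal (∑ s ∈ 𝒮, rejProb p n s) := by
  have hmeas : ∀ s : Finset (Fin N), MeasurableSet (sampleOf ε ⁻¹' {s}) := fun s => by
    rw [hrej.sampleOf_preimage_singleton, Set.ofPred_forall]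
    exact MeasurableSet.iInter fun i => hrej.2.1 i (measurableSet_singleton _)
  rw [← sum_measure_preimage_singleton 𝒮 fun s _ => hmeas s,
    ENNReal.ofReal_sum_of_nonneg fun s _ => rejProb_nonneg hp n s]
  refine Finset.sum_congr rfl fun s _ => ?_
  rw [hrej.sampleOf_preimage_singleton, hrej.2.2 s, ofReal_rejProb]

lemma measure_eq_one (hrej : IsRejective μ n p ε) (hp : ∀ i, 0 < p i ∧ p i < 1) (i : Fin N) :
    μ {ω | ε ω i = 1} = ENNReal.ofReal (inclProb p n i) := by
  rw [inclProb, ← hrej.measure_sampleOf_preimage hp]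
  congr 1
  ext ω
  simp [sampleOf]

lemma compl (hrej : IsRejective μ n p ε) (hn : n ≤ N) :
    IsRejective μ (N - n) (fun i => 1 - p i) (fun ω i => 1 - ε ω i) := by
  refine ⟨fun ω i => ?_, fun i => (hrej.2.1 i).const_sub 1, fun s => ?_⟩
  · rcases hrej.1 ω i with h | h <;> simp [h]
  · have hset : {ω | ∀ i, 1 - ε ω i = if i ∈ s then 1 else 0}
        = {ω | ∀ i, ε ω i = if i ∈ sᶜ then 1 else 0} := by
      ext ω
      refine forall_congr' fun i => ?_
      by_cases hi : i ∈ s <;> simp only [hi, Finset.mem_compl, if_true, if_false, not_true,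
        not_false_eq_true] <;> constructor <;> intro h <;> linarith
    rw [hset, hrej.2.2, ← ofReal_rejProb, ← ofReal_rejProb, rejProb_compl hn]

theorem measure_le_exp_neg_entH (hrej : IsRejective μ n p ε) (hp : ∀ i, 0 < p i ∧ p i < 1)
    (hn : n ≤ N) (P : Finset (Fin N)) {c : Fin N → ℝ} {A B t : ℝ} (hA : 0 < A) (hB : 0 < B)
    (ht : 0 ≤ t) (hc : ∀ i ∈ P, 0 ≤ c i ∧ c i ≤ B)
    (hvar : ∑ i ∈ P, inclProb p n i * (1 - inclProb p n i) * c i ^ 2 ≤ A) :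
    μ {ω | t ≤ ∑ i ∈ P, c i * (ε ω i - inclProb p n i)}
      ≤ ENNReal.ofReal (exp (-(A / B ^ 2) * entH (B * t / A))) := by
  set X : Fin N → Finset (Fin N) → ℝ := fun i s => if i ∈ s then 1 else 0
  have hset : {ω | t ≤ ∑ i ∈ P, c i * (ε ω i - inclProb p n i)}
      = sampleOf ε ⁻¹' ↑({s | t ≤ ∑ i ∈ P, c i * (X i s - inclProb p n i)} :
        Finset (Finset (Fin N))) := by
    ext ω
    simp only [Set.mem_preimage, Finset.coe_filter, Finset.mem_univ, true_and, X,
      Set.mem_ofPred_eq, ← hrej.eq_ite_mem_sampleOf ω]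
  have hmom : ∀ T ⊆ P, ∑ s, rejProb p n s * ∏ i ∈ T, X i s ≤ ∏ i ∈ T, inclProb p n i :=
    fun T _ => by
      simpa [X, Finset.prod_boole, ← Finset.sum_filter, ← Finset.subset_iff]
        using sum_rejProb_subset_le_prod hp hn T
  rw [hset, hrej.measure_sampleOf_preimage hp]
  exact ENNReal.ofReal_le_ofReal (sum_le_exp_neg_entH _ X P _ (rejProb_nonneg hp n)
    (fun i s => by by_cases i ∈ s <;> simp [X, *])
    (fun i _ => ⟨inclProb_nonneg hp n i, inclProb_le_one hp hn i⟩) hmom hA hB ht hc hvar)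

theorem measure_horvitzThompson_sub_sum_ge_le (hrej : IsRejective μ n p ε) (hp : ∀ i, 0 < p i ∧ p i < 1)
    (hn0 : 0 < n) (hn : n ≤ N) (x : Fin N → ℝ) {A B t : ℝ}
    (hA : A = ∑ i, (1 - inclProb p n i) / inclProb p n i * x i ^ 2)
    (hB : ∀ i, |x i| / inclProb p n i ≤ B) (hA0 : 0 < A) (hB0 : 0 < B) (ht : 0 ≤ t) :
    μ {ω | ∑ i, (ε ω i / inclProb p n i) * x i - ∑ i, x i ≥ t}
      ≤ ENNReal.ofReal (2 * exp (-(A / B ^ 2) * entH (B * t / (2 * A)))) := by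
  have hpos : ∀ i, 0 < inclProb p n i := inclProb_pos hp hn0 hn
  have hvar : ∀ S : Finset (Fin N),
      ∑ i ∈ S, inclProb p n i * (1 - inclProb p n i) * (x i / inclProb p n i) ^ 2 ≤ A := by
    intro S
    rw [hA]
    refine (Finset.sum_congr rfl fun i _ => by field_simp [(hpos i).ne']).trans_le
      (Finset.sum_le_univ_sum_of_nonneg fun i => mul_nonneg (div_nonneg (sub_nonneg.2
        (inclProb_le_one hp hn i)) (hpos i).le) (sq_nonneg _))
  have hhalf : B * (t / 2) / A = B * t / (2 * A) := by ring
  have hplus := hrej.measure_le_exp_neg_entH hp hn {i | 0 ≤ x i}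
    (c := fun i => x i / inclProb p n i) (t := t / 2) hA0 hB0 (by linarith) (fun i hi => by
      have hi : 0 ≤ x i := (Finset.mem_filter.1 hi).2
      exact ⟨div_nonneg hi (hpos i).le, abs_of_nonneg hi ▸ hB i⟩) (hvar _)
  have hminus := (hrej.compl hn).measure_le_exp_neg_entH
    (fun i => ⟨sub_pos.2 (hp i).2, by linarith [hp i]⟩) (Nat.sub_le N n) {i | ¬ 0 ≤ x i}
    (c := fun i => -(x i / inclProb p n i)) (t := t / 2) hA0 hB0 (by linarith) (fun i hi => by
      have hi : x i < 0 := not_le.1 (Finset.mem_filter.1 hi).2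
      refine ⟨neg_nonneg.2 (div_nonpos_of_nonpos_of_nonneg hi.le (hpos i).le), ?_⟩
      rw [← neg_div, ← abs_of_neg hi]
      exact hB i) (by
      simp only [inclProb_compl hp hn]
      exact (Finset.sum_congr rfl fun i _ => by ring).trans_le (hvar _))
  simp only [inclProb_compl hp hn, hhalf] at hplus hminus
  calc μ {ω | ∑ i, (ε ω i / inclProb p n i) * x i - ∑ i, x i ≥ t}
      ≤ _ := measure_sum_div_mul_sub_sum_ge_le μ ε _ x (fun i => (hpos i).ne') t
    _ ≤ _ := add_le_add hplus hminus
    _ = _ := by rw [← ENNReal.ofReal_add (exp_pos _).le (exp_pos _).le, ← two_mul]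

end IsRejective

theorem rejective_na_tail_bound_general
    {Ω : Type*} [MeasurableSpace Ω] (μ : Measure Ω)
    {N : ℕ} (n : ℕ) (hn1 : 1 ≤ n)
    (p : Fin N → ℝ) (hp : ∀ i, 0 < p i ∧ p i < 1) (hsum : ∑ i, p i = (n : ℝ))
    (ε : Ω → Fin N → ℝ) (hrej : IsRejective μ n p ε)
    (pii : Fin N → ℝ) (hpii : ∀ i, μ {ω | ε ω i = 1} = ENNReal.ofReal (pii i))
    (hpii01 : ∀ i, 0 < pii i ∧ pii i ≤ 1)
    (x : Fin N → ℝ) (hx : ∃ i, x i ≠ 0)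
    (A B : ℝ)
    (hA : A = ∑ i, ((1 - pii i) / pii i) * x i ^ 2)
    (hB : IsGreatest (Set.range fun i => |x i| / pii i) B)
    (t : ℝ) (ht : 0 ≤ t) :
    μ {ω | ∑ i, (ε ω i / pii i) * x i - ∑ i, x i ≥ t}
        ≤ ENNReal.ofReal (2 * Real.exp (-(A / B ^ 2) * entH (B * t / (2 * A)))) ∧
      2 * Real.exp (-(A / B ^ 2) * entH (B * t / (2 * A)))
        ≤ 2 * Real.exp (-(t ^ 2 / 4) / ((2 / 3) * B * t + 2 * A)) := by
  obtain ⟨i₀, hi₀⟩ := hx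
  have hnN : n < N := by
    simpa [hsum] using Finset.sum_lt_sum_of_nonempty ⟨i₀, Finset.mem_univ i₀⟩ fun i _ => (hp i).2
  obtain rfl : pii = inclProb p n := funext fun i => (ENNReal.ofReal_eq_ofReal_iff
    (hpii01 i).1.le (inclProb_nonneg hp n i)).1 ((hpii i).symm.trans (hrej.measure_eq_one hp i))
  have hBx : ∀ i, |x i| / inclProb p n i ≤ B := fun i => hB.2 (Set.mem_range_self i)
  have hpos := inclProb_pos hp hn1 hnN.le i₀
  have hB0 : 0 < B := (div_pos (abs_pos.2 hi₀) hpos).trans_le (hBx i₀)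
  have hA0 : 0 < A := hA ▸ Finset.sum_pos' (fun i _ => mul_nonneg (div_nonneg
      (sub_nonneg.2 (inclProb_le_one hp hnN.le i)) (inclProb_nonneg hp n i)) (sq_nonneg _))
    ⟨i₀, Finset.mem_univ i₀, mul_pos (div_pos (sub_pos.2 (inclProb_lt_one hp hnN i₀)) hpos)
      (pow_pos (abs_pos.2 hi₀) 2 |>.trans_eq (sq_abs _))⟩
  exact ⟨hrej.measure_horvitzThompson_sub_sum_ge_le hp hn1 hnN.le x hA hBx hA0 hB0 ht,
    by gcongr; exact bennett_exponent_le_bernstein hA0 hB0 ht⟩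

/-- Bennett/Bernstein bounds for the Horvitz–Thompson estimator under rejective sampling,
obtained from the negative association property. -/
theorem rejective_na_tail_bound
    {Ω : Type*} [MeasurableSpace Ω] (μ : Measure Ω) [IsProbabilityMeasure μ]
    {N : ℕ} (hN : 1 ≤ N) (n : ℕ) (hn1 : 1 ≤ n) (hnN : n ≤ N)
    (p : Fin N → ℝ) (hp : ∀ i, 0 < p i ∧ p i < 1) (hsum : ∑ i, p i = (n : ℝ))
    (ε : Ω → Fin N → ℝ) (hrej : IsRejective μ n p ε)
    (pii : Fin N → ℝ) (hpii : ∀ i, μ {ω | ε ω i = 1} = ENNReal.ofReal (pii i))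
    (hpii01 : ∀ i, 0 < pii i ∧ pii i ≤ 1)
    (x : Fin N → ℝ) (hx : ∃ i, x i ≠ 0)
    (A B : ℝ)
    (hA : A = ∑ i, ((1 - pii i) / pii i) * x i ^ 2)
    (hB : IsGreatest (Set.range fun i => |x i| / pii i) B)
    (t : ℝ) (ht : 0 ≤ t) :
    μ {ω | ∑ i, (ε ω i / pii i) * x i - ∑ i, x i ≥ t}
        ≤ ENNReal.ofReal (2 * Real.exp (-(A / B ^ 2) * entH (B * t / (2 * A)))) ∧
      2 * Real.exp (-(A / B ^ 2) * entH (B * t / (2 * A)))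
        ≤ 2 * Real.exp (-(t ^ 2 / 4) / ((2 / 3) * B * t + 2 * A)) :=
  rejective_na_tail_bound_general μ n hn1 p hp hsum ε hrej pii hpii hpii01 x hx A B hA hB t ht
end
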